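/- Let N be an even positive integer and p an integer with 2 ≤ p ≤ N/2; assume u^p[2n]² + v^p[2n]² > 0 for every n. Then the N signals {ψ_{[1],0}^p[·−2l] : 0 ≤ l < N/2} ∪ {ψ_{[1],1}^p[·−2l] : 0 ≤ l < N/2} form an orthonormal basis of Π[N]; that is, ⟨ψ_{[1],λ}^p[·−2l], ψ_{[1],μ}^p[·−2m]⟩ = 1 if λ = μ and l = m, and = 0 otherwise, for λ,μ ∈ {0,1} and 0 ≤ l,m < N/2. -/

import Mathlib

open MeasureTheory

namespace WP

/-- The root of unity ω = e^{2πi/N}. -/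
noncomputable def ww (N : ℕ) : ℂ := Complex.exp (2 * Real.pi * Complex.I / N)

/-- DFT of a signal `x ∈ Π[N]`: x̂[n] = Σ_{k=0}^{N−1} ω^{−kn} x[k]. -/
noncomputable def dft (N : ℕ) (x : ℤ → ℂ) (n : ℤ) : ℂ :=
  ∑ k ∈ Finset.range N, ww N ^ (-((k : ℤ) * n)) * x k

/-- Inner product on `Π[N]`. -/
noncomputable def inner1 (N : ℕ) (x y : ℤ → ℂ) : ℂ :=
  ∑ k ∈ Finset.range N, x k * (starRingEnd ℂ) (y k)

/-- The discrete periodic Hilbert transform, defined via the DFT: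
    Ĥ(x)[n] = −i·x̂[n] for 0<n<N/2, i·x̂[n] for N/2<n<N, 0 at n=0 and n=N/2. -/
noncomputable def hilbertT (N : ℕ) (x : ℤ → ℂ) (k : ℤ) : ℂ :=
  (N : ℂ)⁻¹ * ∑ n ∈ Finset.range N,
    (if 0 < n ∧ n < N / 2 then -Complex.I else if N / 2 < n ∧ n < N then Complex.I else 0) *
      dft N x n * ww N ^ ((k * (n : ℤ)))

/-- The complementary-WP operator `C`, defined via the DFT:
    Ĉ(x)[n] = −i·x̂[n] for 0<n<N/2, i·x̂[n] for N/2<n<N, x̂[0] at 0, x̂[N/2] at N/2. -/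
noncomputable def cwpT (N : ℕ) (x : ℤ → ℂ) (k : ℤ) : ℂ :=
  (N : ℂ)⁻¹ * ∑ n ∈ Finset.range N,
    (if n = 0 ∨ n = N / 2 then 1 else if n < N / 2 then -Complex.I else Complex.I) *
      dft N x n * ww N ^ ((k * (n : ℤ)))

/-- The order-p B-spline b^p(t). -/
noncomputable def bspline (p : ℕ) (t : ℝ) : ℝ :=
  (1 / (Nat.factorial (p - 1) : ℝ)) *
    ∑ k ∈ Finset.range (p + 1),
      (-1 : ℝ) ^ k * (p.choose k : ℝ) * max (t + (p : ℝ) / 2 - (k : ℝ)) 0 ^ (p - 1)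

/-- u^p[n] = Σ_{k=−N/2}^{N/2−1} ω^{−kn} b^p(k). -/
noncomputable def uSeq (N p : ℕ) (n : ℤ) : ℂ :=
  ∑ k ∈ Finset.range N,
    ww N ^ (-(((k : ℤ) - (N : ℤ) / 2) * n)) * (bspline p ((k : ℝ) - (N : ℝ) / 2) : ℂ)

/-- v^p[n] = e^{−πin/N} Σ_{k=−N/2}^{N/2−1} ω^{−kn} b^p(k+1/2). -/
noncomputable def vSeq (N p : ℕ) (n : ℤ) : ℂ :=
  Complex.exp (-Real.pi * Complex.I * n / N) *
    ∑ k ∈ Finset.range N,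
      ww N ^ (-(((k : ℤ) - (N : ℤ) / 2) * n)) *
        (bspline p ((k : ℝ) - (N : ℝ) / 2 + 1 / 2) : ℂ)

/-- The span-two discrete-time B-spline b_{[1]}^p ∈ Π[N]:
    the N-periodic signal with b_{[1]}^p[k] = b^p(k/2)/2 for −N/2 ≤ k ≤ N/2−1. -/
noncomputable def bs1 (N p : ℕ) (k : ℤ) : ℂ :=
  ((bspline p ((((k + (N : ℤ) / 2) % (N : ℤ) - (N : ℤ) / 2 : ℤ) : ℝ) / 2) : ℝ) : ℂ) / 2

/-- Its DFT b̂_{[1]}^p[n] = Σ_{k=−N/2}^{N/2−1} ω^{−kn} b_{[1]}^p[k]. -/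
noncomputable def bhat1 (N p : ℕ) (n : ℤ) : ℂ :=
  ∑ k ∈ Finset.range N,
    ww N ^ (-(((k : ℤ) - (N : ℤ) / 2) * n)) * bs1 N p ((k : ℤ) - (N : ℤ) / 2)

/-- Υ^p[n] = (u^p[2n]² + v^p[2n]²)/4. -/
noncomputable def upsilon (N p : ℕ) (n : ℤ) : ℂ :=
  (uSeq N p (2 * n) ^ 2 + vSeq N p (2 * n) ^ 2) / 4

/-- β[n] = b̂_{[1]}^p[n] / √(Υ^p[n]). -/
noncomputable def betaS (N p : ℕ) (n : ℤ) : ℂ := bhat1 N p n / upsilon N p n ^ ((1 : ℂ) / 2)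

/-- α[n] = ω^n · β[n+N/2]. -/
noncomputable def alphaS (N p : ℕ) (n : ℤ) : ℂ := ww N ^ n * betaS N p (n + (N : ℤ) / 2)

/-- The first-level wavelet packets ψ_{[1],λ}^p, λ = 0,1, defined via their DFTs
    ψ̂_{[1],0}^p[n] = β[n] and ψ̂_{[1],1}^p[n] = α[n]. -/
noncomputable def psi1 (N p lam : ℕ) (k : ℤ) : ℂ :=
  (N : ℂ)⁻¹ * ∑ n ∈ Finset.range N,
    (if lam = 0 then betaS N p n else alphaS N p n) * ww N ^ ((k * (n : ℤ)))



/-!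
The packets are inverse DFTs, so by Parseval the inner product of the shifts by `2l` and `2m` is
`N⁻¹ Σₙ ψ̂_λ[n] conj ψ̂_μ[n] ω^{2(m-l)n}`. As `ω^{2(m-l)n}` has period `N/2` in `n`, pairing `n`
with `n + N/2` reduces orthonormality to
`ψ̂_λ[n] conj ψ̂_μ[n] + ψ̂_λ[n+N/2] conj ψ̂_μ[n+N/2] = 2 δ_{λμ}`.

Because `p ≤ N/2`, all B-spline samples involved lie within one period, so the periodic sums are
sums over `ℤ`. Splitting `b_{[1]}^p` into even and odd samples then gives
`b̂_{[1]}^p[n] = (u^p[2n] + v^p[2n]) / 2`, and the shift `n ↦ n + N/2` fixes `u^p[2n]` and negates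
`v^p[2n]`. The B-spline is even, so `u^p[2n]` and `v^p[2n]` are real, hence so is `β`, and
`β[n]² + β[n+N/2]² = ((u+v)² + (u-v)²) / (4Υ) = 2`. The cases involving `α[n] = ω^n β[n+N/2]`
follow from `ω^{N/2} = -1`.
-/

open Finset ComplexConjugate

theorem neg_one_pow_sub {R : Type*} [Ring R] {k n : ℕ} (h : k ≤ n) :
    (-1 : R) ^ (n - k) = (-1) ^ n * (-1) ^ k := by
  rw [← pow_sub_mul_pow (-1 : R) h, mul_assoc, ← pow_add, ← two_mul, pow_mul, neg_one_sq,
    one_pow, mul_one]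

/-- The `p`-th finite difference of a polynomial of degree `< p` vanishes. -/
theorem sum_range_neg_one_pow_mul_choose_mul_sub_pow {R : Type*} [CommRing R] {m p : ℕ}
    (hmp : m < p) (c : R) :
    ∑ k ∈ range (p + 1), (-1) ^ k * (p.choose k : R) * (c - k) ^ m = 0 := by
  have h := fwdDiff_iter_eq_sum_shift (h := (1 : R)) (fun r : R => r ^ m) p (-c)
  rw [fwdDiff_iter_pow_eq_zero_of_lt hmp, Pi.zero_apply] at h
  have hterm : ∀ k ∈ range (p + 1), ((-1 : ℤ) ^ (p - k) * p.choose k) • (-c + k • (1 : R)) ^ m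
      = (-1) ^ (p + m) * ((-1) ^ k * p.choose k * (c - k) ^ m) := by
    intro k hk
    have hpow : (-c + k • (1 : R)) ^ m = (-1) ^ m * (c - k) ^ m := by
      rw [nsmul_one, ← neg_pow, neg_sub, neg_add_eq_sub]
    rw [hpow, zsmul_eq_mul]
    push_cast
    rw [neg_one_pow_sub (Nat.lt_succ_iff.mp (mem_range.mp hk)), pow_add]
    ring
  rw [sum_congr rfl hterm, ← mul_sum] at h
  exact ((isUnit_neg_one.pow _).mul_right_eq_zero).mp h.symm

theorem max_neg_zero_pow {m : ℕ} (hm : m ≠ 0) (x : ℝ) :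
    max (-x) 0 ^ m = (-1) ^ m * (x ^ m - max x 0 ^ m) := by
  rcases le_total 0 x with hx | hx
  · rw [max_eq_right (neg_nonpos.mpr hx), max_eq_left hx, zero_pow hm, sub_self, mul_zero]
  · rw [max_eq_left (neg_nonneg.mpr hx), max_eq_right hx, zero_pow hm, sub_zero, neg_pow]

theorem bspline_neg {p : ℕ} (hp : 2 ≤ p) (t : ℝ) : bspline p (-t) = bspline p t := by
  unfold bspline
  congr 1
  rw [← sum_range_reflect]
  have hterm : ∀ j ∈ range (p + 1),
      (-1 : ℝ) ^ (p + 1 - 1 - j) * ((p.choose (p + 1 - 1 - j) : ℕ) : ℝ)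
          * max (-t + p / 2 - ((p + 1 - 1 - j : ℕ) : ℝ)) 0 ^ (p - 1)
        = (-1) ^ j * p.choose j * max (t + p / 2 - j) 0 ^ (p - 1)
          - (-1) ^ j * p.choose j * (t + p / 2 - j) ^ (p - 1) := by
    intro j hj
    have hjp : j ≤ p := Nat.lt_succ_iff.mp (mem_range.mp hj)
    have hsign : (-1 : ℝ) ^ p = -(-1) ^ (p - 1) := by
      conv_lhs => rw [← Nat.sub_add_cancel (by omega : 1 ≤ p), pow_succ, mul_neg_one]
    rw [Nat.add_sub_cancel, Nat.choose_symm hjp, Nat.cast_sub hjp,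
      show -t + p / 2 - ((p : ℝ) - j) = -(t + p / 2 - j) by ring,
      max_neg_zero_pow (by omega), neg_one_pow_sub hjp, hsign]
    have hsq : ((-1 : ℝ) ^ (p - 1)) ^ 2 = 1 := by rw [← pow_mul, pow_mul', neg_one_sq, one_pow]
    linear_combination (-(-1 : ℝ) ^ j * p.choose j
      * ((t + p / 2 - j) ^ (p - 1) - max (t + p / 2 - j) 0 ^ (p - 1))) * hsq
  rw [sum_congr rfl hterm, sum_sub_distrib,
    sum_range_neg_one_pow_mul_choose_mul_sub_pow (by omega) (t + p / 2), sub_zero]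

theorem abs_lt_of_bspline_ne_zero {p : ℕ} (hp : 2 ≤ p) {t : ℝ} (ht : bspline p t ≠ 0) :
    |t| < p / 2 := by
  have vanish : ∀ s : ℝ, s ≤ -(p / 2) → bspline p s = 0 := fun s hs => by
    refine mul_eq_zero_of_right _ (sum_eq_zero fun k _ => ?_)
    rw [max_eq_right (by linarith [(Nat.cast_nonneg k : (0 : ℝ) ≤ k)]), zero_pow (by omega),
      mul_zero]
  contrapose! ht
  rcases le_abs'.mp ht with h | h
  · exact vanish t h
  · rw [← bspline_neg hp]
    exact vanish (-t) (by linarith)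

theorem ww_ne_zero (N : ℕ) : ww N ≠ 0 := Complex.exp_ne_zero _

theorem ww_isPrimitiveRoot {N : ℕ} (hN : N ≠ 0) : IsPrimitiveRoot (ww N) N :=
  Complex.isPrimitiveRoot_exp N hN

theorem conj_ww_zpow (N : ℕ) (z : ℤ) : conj (ww N ^ z) = ww N ^ (-z) := by
  have hconj : conj (ww N) = (ww N)⁻¹ := by
    rw [ww, ← Complex.exp_conj, ← Complex.exp_neg]
    congr 1
    simp [map_ofNat, Complex.conj_ofReal, neg_div]
  rw [map_zpow₀, hconj, inv_zpow', zpow_neg]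

theorem ww_zpow_add_mul_self (N : ℕ) (a t : ℤ) : ww N ^ (a + N * t) = ww N ^ a := by
  rcases eq_or_ne N 0 with rfl | hN
  · simp
  rw [zpow_add₀ (ww_ne_zero N), zpow_mul, zpow_natCast, (ww_isPrimitiveRoot hN).pow_eq_one,
    one_zpow, mul_one]

theorem ww_zpow_half {N M : ℕ} (hNM : N = 2 * M) (hM : M ≠ 0) : ww N ^ (M : ℤ) = -1 := by
  rw [zpow_natCast, ww, ← Complex.exp_nat_mul, ← Complex.exp_pi_mul_I, hNM]
  congr 1
  push_cast
  field_simp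

theorem ww_zpow_two_mul {N M : ℕ} (hNM : N = 2 * M) (z : ℤ) : ww N ^ (2 * z) = ww M ^ z := by
  rw [zpow_mul, zpow_two, ww, ww, ← Complex.exp_add, hNM]
  congr 2
  push_cast
  rcases eq_or_ne (M : ℂ) 0 with hM | hM
  · simp [hM]
  · field_simp
    ring

theorem sum_range_ww_zpow_mul {N : ℕ} (hN : N ≠ 0) (d : ℤ) :
    ∑ k ∈ range N, ww N ^ ((k : ℤ) * d) = if (N : ℤ) ∣ d then (N : ℂ) else 0 := by
  have hζ := ww_isPrimitiveRoot hN
  simp_rw [mul_comm _ d, zpow_mul, zpow_natCast]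
  split_ifs with hd
  · simp [(hζ.zpow_eq_one_iff_dvd d).mpr hd]
  · have hne : ww N ^ d ≠ 1 := mt (hζ.zpow_eq_one_iff_dvd d).mp hd
    rw [geom_sum_eq hne, ← zpow_natCast, ← zpow_mul, mul_comm, zpow_mul, zpow_natCast,
      hζ.pow_eq_one, one_zpow, sub_self, zero_div]

theorem sum_range_ww_zpow_mul_sub {N n m : ℕ} (hn : n < N) (hm : m < N) :
    ∑ k ∈ range N, ww N ^ ((k : ℤ) * (n - m)) = if n = m then (N : ℂ) else 0 := by
  rw [sum_range_ww_zpow_mul (by omega)]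
  refine if_congr ⟨fun h => ?_, fun h => by simp [h]⟩ rfl rfl
  have := Int.eq_zero_of_abs_lt_dvd h (by rw [abs_lt]; omega)
  omega

noncomputable def idft (N : ℕ) (c : ℤ → ℂ) (k : ℤ) : ℂ :=
  (N : ℂ)⁻¹ * ∑ n ∈ range N, c n * ww N ^ (k * (n : ℤ))

theorem idft_sub (N : ℕ) (c : ℤ → ℂ) (k a : ℤ) :
    idft N c (k - a) = idft N (fun n => c n * ww N ^ (-(a * n))) k := by
  simp only [idft, mul_assoc, ← zpow_add₀ (ww_ne_zero N)]
  ring_nf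

theorem inner1_idft {N : ℕ} (hN : N ≠ 0) (c c' : ℤ → ℂ) :
    inner1 N (idft N c) (idft N c') = (N : ℂ)⁻¹ * ∑ n ∈ range N, c n * conj (c' n) := by
  have horth : ∀ n ∈ range N, ∀ m ∈ range N,
      ∑ k ∈ range N, ww N ^ ((k : ℤ) * n) * conj (ww N ^ ((k : ℤ) * m))
        = if n = m then (N : ℂ) else 0 := fun n hn m hm => by
    simp_rw [conj_ww_zpow, ← zpow_add₀ (ww_ne_zero N), ← mul_neg, ← mul_add, ← sub_eq_add_neg]
    exact sum_range_ww_zpow_mul_sub (mem_range.mp hn) (mem_range.mp hm)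
  calc inner1 N (idft N c) (idft N c')
      = (N : ℂ)⁻¹ * (N : ℂ)⁻¹ * ∑ n ∈ range N, ∑ m ∈ range N, c n * conj (c' m) *
          ∑ k ∈ range N, ww N ^ ((k : ℤ) * n) * conj (ww N ^ ((k : ℤ) * m)) := by
        simp only [inner1, idft, map_mul, map_sum, map_inv₀, Complex.conj_natCast, mul_sum,
          sum_mul]
        refine (sum_congr rfl fun k _ => sum_comm).trans ?_
        rw [sum_comm]
        refine sum_congr rfl fun n _ => ?_
        rw [sum_comm]
        refine sum_congr rfl fun m _ => sum_congr rfl fun k _ => by ring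
    _ = (N : ℂ)⁻¹ * (N : ℂ)⁻¹ * ∑ n ∈ range N, c n * conj (c' n) * N := by
        congr 1
        refine sum_congr rfl fun n hn => ?_
        rw [sum_congr rfl fun m hm => by rw [horth n hn m hm]]
        simp [mul_ite, hn]
    _ = (N : ℂ)⁻¹ * ∑ n ∈ range N, c n * conj (c' n) := by
        rw [← sum_mul]
        field_simp

theorem inner1_idft_shift_two_mul {N M : ℕ} (hNM : N = 2 * M) (hM : M ≠ 0) {c c' : ℤ → ℂ}
    {δ : ℂ} (hcc : ∀ n : ℤ, c n * conj (c' n) + c (n + M) * conj (c' (n + M)) = 2 * δ)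
    {l m : ℕ} (hl : l < M) (hm : m < M) :
    inner1 N (fun k => idft N c (k - 2 * l)) (fun k => idft N c' (k - 2 * m))
      = if l = m then δ else 0 := by
  have hterm : ∀ n : ℤ, c n * ww N ^ (-(2 * l * n)) * conj (c' n * ww N ^ (-(2 * m * n)))
      = c n * conj (c' n) * ww M ^ (n * (m - l)) := fun n => by
    rw [map_mul, conj_ww_zpow, neg_neg, ← ww_zpow_two_mul hNM, mul_mul_mul_comm,
      ← zpow_add₀ (ww_ne_zero N)]
    ring_nf
  simp_rw [idft_sub]
  calc inner1 N (idft N fun n => c n * ww N ^ (-(2 * l * n)))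
        (idft N fun n => c' n * ww N ^ (-(2 * m * n)))
      = (N : ℂ)⁻¹ * ∑ n ∈ range M,
          (c n * conj (c' n) + c (n + M) * conj (c' (n + M))) * ww M ^ ((n : ℤ) * (m - l)) := by
        rw [inner1_idft (by omega), show range N = range (M + M) by rw [hNM, two_mul],
          sum_range_add, ← sum_add_distrib]
        refine congrArg _ (sum_congr rfl fun n _ => ?_)
        rw [hterm, hterm, Nat.cast_add, add_comm (M : ℤ), add_mul, ww_zpow_add_mul_self]
        ring
    _ = (N : ℂ)⁻¹ * (2 * δ * ∑ n ∈ range M, ww M ^ ((n : ℤ) * (m - l))) := by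
        simp_rw [hcc, mul_sum]
    _ = if l = m then δ else 0 := by
        rw [sum_range_ww_zpow_mul_sub hm hl]
        by_cases h : l = m
        · rw [if_pos h.symm, if_pos h, hNM]
          push_cast
          field_simp
        · rw [if_neg (Ne.symm h), if_neg h, mul_zero, mul_zero]

theorem tsum_int_eq_tsum_even_add_tsum_odd {G : Type*} [AddCommGroup G] [UniformSpace G]
    [IsUniformAddGroup G] [CompleteSpace G] [T2Space G] {f : ℤ → G} (hf : Summable f) :
    ∑' j, f j = ∑' i, f (2 * i) + ∑' i, f (2 * i + 1) := by
  have heven : Function.Injective (fun i : ℤ => 2 * i) := mul_right_injective₀ two_ne_zero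
  have hodd : Function.Injective (fun i : ℤ => 2 * i + 1) := fun a b h => by
    simp only at h
    omega
  have hcompl : IsCompl (Set.range fun i : ℤ => 2 * i) (Set.range fun i : ℤ => 2 * i + 1) := by
    refine ⟨Set.disjoint_left.mpr ?_, codisjoint_iff.mpr (Set.eq_univ_of_forall fun j => ?_)⟩
    · rintro _ ⟨a, rfl⟩ ⟨b, hb⟩
      dsimp only at hb
      omega
    · obtain ⟨k, hk | hk⟩ := Int.even_or_odd' j
      exacts [Or.inl ⟨k, hk.symm⟩, Or.inr ⟨k, hk.symm⟩]
  exact (HasSum.add_isCompl hcompl (heven.hasSum_range_iff.mpr (hf.comp_injective heven).hasSum)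
    (hodd.hasSum_range_iff.mpr (hf.comp_injective hodd).hasSum)).tsum_eq

theorem summable_of_abs_lt {α : Type*} [AddCommMonoid α] [TopologicalSpace α] {M : ℕ}
    {f : ℤ → α} (hf : ∀ j, f j ≠ 0 → |j| < M) : Summable f :=
  summable_of_ne_finset_zero (s := Ioo (-M : ℤ) M) fun j hj => by
    by_contra h
    exact hj (mem_Ioo.mpr (abs_lt.mp (hf j h)))

theorem sum_range_sub_eq_tsum {α : Type*} [AddCommMonoid α] [TopologicalSpace α] {M : ℕ}
    {f : ℤ → α} (hf : ∀ j, f j ≠ 0 → |j| < M) :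
    ∑ k ∈ range (2 * M), f (k - M) = ∑' j, f j := by
  let e : ℕ ↪ ℤ := ⟨fun k => (k : ℤ) - M, fun x y h => by simpa using h⟩
  rw [tsum_eq_sum (s := (range (2 * M)).map e), sum_map]
  · rfl
  intro j hj
  by_contra h
  have := abs_lt.mp (hf j h)
  exact hj (mem_map.mpr ⟨(j + M).toNat, mem_range.mpr (by omega),
    show ((j + M).toNat : ℤ) - M = j by omega⟩)

theorem abs_lt_of_bspline_ne_zero_of_abs_le {p M : ℕ} (hp : 2 ≤ p) (hpM : p ≤ M) {j : ℤ} {t : ℝ}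
    (ht : bspline p t ≠ 0) (hjt : |(j : ℝ)| ≤ 2 * |t|) : |j| < M := by
  have h := abs_lt_of_bspline_ne_zero hp ht
  have hpM' : (p : ℝ) ≤ M := by exact_mod_cast hpM
  have : ((|j| : ℤ) : ℝ) < M := by rw [Int.cast_abs]; linarith
  exact_mod_cast this

theorem abs_lt_of_bspline_half_ne_zero {p M : ℕ} (hp : 2 ≤ p) (hpM : p ≤ M) {j : ℤ}
    (h : bspline p (j / 2) ≠ 0) : |j| < M :=
  abs_lt_of_bspline_ne_zero_of_abs_le hp hpM h (by rw [abs_div, abs_two]; linarith)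

theorem uSeq_eq_tsum {N M p : ℕ} (hNM : N = 2 * M) (hp : 2 ≤ p) (hpM : p ≤ M) (n : ℤ) :
    uSeq N p n = ∑' j : ℤ, ww N ^ (-(j * n)) * bspline p j := by
  subst hNM
  rw [uSeq, ← sum_range_sub_eq_tsum]
  · refine sum_congr rfl fun k _ => ?_
    push_cast
    rw [show (2 * M : ℤ) / 2 = M by omega, show (2 * M : ℝ) / 2 = M by ring]
  · intro j hj
    refine abs_lt_of_bspline_ne_zero_of_abs_le hp hpM
      (Complex.ofReal_ne_zero.mp (right_ne_zero_of_mul hj)) ?_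
    linarith [abs_nonneg (j : ℝ)]

theorem vSeq_two_mul_eq_tsum {N M p : ℕ} (hNM : N = 2 * M) (hp : 2 ≤ p) (hpM : p ≤ M)
    (n : ℤ) :
    vSeq N p (2 * n) = ∑' j : ℤ, ww N ^ (-((2 * j + 1) * n)) * bspline p (j + 1 / 2) := by
  subst hNM
  have hphase : Complex.exp (-Real.pi * Complex.I * ((2 * n : ℤ) : ℂ) / ((2 * M : ℕ) : ℂ))
      = ww (2 * M) ^ (-n) := by
    rw [ww, ← Complex.exp_int_mul]
    congr 1
    push_cast
    rcases eq_or_ne (M : ℂ) 0 with hM | hM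
    · simp [hM]
    · field_simp
  rw [vSeq, hphase, mul_sum, ← sum_range_sub_eq_tsum]
  · refine sum_congr rfl fun k _ => ?_
    push_cast
    rw [show (2 * M : ℤ) / 2 = M by omega, show (2 * M : ℝ) / 2 = M by ring, ← mul_assoc,
      ← zpow_add₀ (ww_ne_zero _)]
    ring_nf
  · intro j hj
    refine abs_lt_of_bspline_ne_zero_of_abs_le hp hpM
      (Complex.ofReal_ne_zero.mp (right_ne_zero_of_mul hj)) ?_
    rcases le_or_gt 0 j with hj0 | hj0
    · have : (0 : ℝ) ≤ j := by exact_mod_cast hj0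
      rw [abs_of_nonneg this, abs_of_nonneg (by linarith)]
      linarith
    · have : (j : ℝ) ≤ -1 := by exact_mod_cast Int.le_sub_one_of_lt hj0
      rw [abs_of_neg (by linarith), abs_of_neg (by linarith)]
      linarith

theorem bhat1_eq_tsum {N M p : ℕ} (hNM : N = 2 * M) (hp : 2 ≤ p) (hpM : p ≤ M) (n : ℤ) :
    bhat1 N p n = ∑' j : ℤ, ww N ^ (-(j * n)) * (bspline p (j / 2) / 2) := by
  subst hNM
  rw [bhat1, ← sum_range_sub_eq_tsum]
  · refine sum_congr rfl fun k hk => ?_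
    have hk := mem_range.mp hk
    rw [bs1, show ((2 * M : ℕ) : ℤ) / 2 = M by omega, sub_add_cancel,
      Int.emod_eq_of_lt (by omega) (by omega)]
  · exact fun j hj => abs_lt_of_bspline_half_ne_zero hp hpM
      (Complex.ofReal_ne_zero.mp (div_ne_zero_iff.mp (right_ne_zero_of_mul hj)).1)

theorem bhat1_eq_half_add {N M p : ℕ} (hNM : N = 2 * M) (hp : 2 ≤ p) (hpM : p ≤ M) (n : ℤ) :
    bhat1 N p n = (uSeq N p (2 * n) + vSeq N p (2 * n)) / 2 := by
  have hsum : Summable fun j : ℤ => ww N ^ (-(j * n)) * (bspline p (j / 2) / 2 : ℂ) :=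
    summable_of_abs_lt fun j hj => abs_lt_of_bspline_half_ne_zero hp hpM
      (Complex.ofReal_ne_zero.mp (div_ne_zero_iff.mp (right_ne_zero_of_mul hj)).1)
  rw [bhat1_eq_tsum hNM hp hpM, tsum_int_eq_tsum_even_add_tsum_odd hsum,
    uSeq_eq_tsum hNM hp hpM, vSeq_two_mul_eq_tsum hNM hp hpM, add_div, ← tsum_div_const,
    ← tsum_div_const]
  congr 1 <;> refine tsum_congr fun i => ?_ <;> push_cast <;> ring_nf

theorem conj_uSeq {N M p : ℕ} (hNM : N = 2 * M) (hp : 2 ≤ p) (hpM : p ≤ M) (n : ℤ) :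
    conj (uSeq N p n) = uSeq N p n := by
  rw [uSeq_eq_tsum hNM hp hpM, Complex.conj_tsum, ← (Equiv.neg ℤ).tsum_eq]
  refine tsum_congr fun j => ?_
  rw [map_mul, conj_ww_zpow, Complex.conj_ofReal, Equiv.neg_apply, Int.cast_neg, bspline_neg hp]
  ring_nf

theorem conj_vSeq_two_mul {N M p : ℕ} (hNM : N = 2 * M) (hp : 2 ≤ p) (hpM : p ≤ M) (n : ℤ) :
    conj (vSeq N p (2 * n)) = vSeq N p (2 * n) := by
  rw [vSeq_two_mul_eq_tsum hNM hp hpM, Complex.conj_tsum, ← (Equiv.subLeft (-1 : ℤ)).tsum_eq]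
  refine tsum_congr fun j => ?_
  rw [map_mul, conj_ww_zpow, Complex.conj_ofReal, Equiv.subLeft_apply, Int.cast_sub,
    show ((-1 : ℤ) : ℝ) - j + 1 / 2 = -(j + 1 / 2) by push_cast; ring, bspline_neg hp]
  ring_nf

theorem uSeq_add_self (N p : ℕ) (n : ℤ) : uSeq N p (n + N) = uSeq N p n := by
  refine sum_congr rfl fun k _ => ?_
  rw [show -(((k : ℤ) - N / 2) * (n + N)) = -(((k : ℤ) - N / 2) * n) + N * -((k : ℤ) - N / 2)
    by ring, ww_zpow_add_mul_self]

theorem vSeq_add_self {N : ℕ} (hN : N ≠ 0) (p : ℕ) (n : ℤ) : vSeq N p (n + N) = -vSeq N p n := by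
  have hphase : Complex.exp (-Real.pi * Complex.I * ((n + N : ℤ) : ℂ) / N)
      = -Complex.exp (-Real.pi * Complex.I * n / N) := by
    have hN' : (N : ℂ) ≠ 0 := Nat.cast_ne_zero.mpr hN
    rw [show -Real.pi * Complex.I * ((n + N : ℤ) : ℂ) / N
        = -Real.pi * Complex.I * n / N - Real.pi * Complex.I by push_cast; field_simp; ring,
      Complex.exp_sub, Complex.exp_pi_mul_I, div_neg, div_one]
  rw [vSeq, vSeq, hphase, neg_mul]
  congr 2
  refine sum_congr rfl fun k _ => ?_
  rw [show -(((k : ℤ) - N / 2) * (n + N)) = -(((k : ℤ) - N / 2) * n) + N * -((k : ℤ) - N / 2)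
    by ring, ww_zpow_add_mul_self]

theorem uSeq_two_mul_add_half {N M : ℕ} (hNM : N = 2 * M) (p : ℕ) (n : ℤ) :
    uSeq N p (2 * (n + M)) = uSeq N p (2 * n) := by
  rw [show 2 * (n + M) = 2 * n + N by omega, uSeq_add_self]

theorem vSeq_two_mul_add_half {N M : ℕ} (hNM : N = 2 * M) (hM : M ≠ 0) (p : ℕ) (n : ℤ) :
    vSeq N p (2 * (n + M)) = -vSeq N p (2 * n) := by
  rw [show 2 * (n + M) = 2 * n + N by omega, vSeq_add_self (by omega)]

theorem upsilon_add_half {N M : ℕ} (hNM : N = 2 * M) (hM : M ≠ 0) (p : ℕ) (n : ℤ) :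
    upsilon N p (n + M) = upsilon N p n := by
  rw [upsilon, upsilon, uSeq_two_mul_add_half hNM, vSeq_two_mul_add_half hNM hM, neg_sq]

theorem bhat1_add_half {N M p : ℕ} (hNM : N = 2 * M) (hp : 2 ≤ p) (hpM : p ≤ M) (n : ℤ) :
    bhat1 N p (n + M) = (uSeq N p (2 * n) - vSeq N p (2 * n)) / 2 := by
  rw [bhat1_eq_half_add hNM hp hpM, uSeq_two_mul_add_half hNM,
    vSeq_two_mul_add_half hNM (by omega), sub_eq_add_neg]

open scoped ComplexOrder

theorem conj_cpow_one_half_of_pos {z : ℂ} (hz : 0 < z) :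
    conj (z ^ (1 / 2 : ℂ)) = z ^ (1 / 2 : ℂ) := by
  obtain ⟨x, hx, hxz⟩ := RCLike.pos_iff_exists_ofReal.mp hz
  obtain rfl : (x : ℂ) = z := hxz
  rw [show (1 / 2 : ℂ) = ((1 / 2 : ℝ) : ℂ) by push_cast; rfl, ← Complex.ofReal_cpow hx.le,
    Complex.conj_ofReal]

theorem cpow_one_half_sq (z : ℂ) : (z ^ (1 / 2 : ℂ)) ^ 2 = z := by
  rw [one_div]
  exact Complex.cpow_ofNat_inv_pow z 2

theorem conj_betaS {N M p : ℕ} (hNM : N = 2 * M) (hp : 2 ≤ p) (hpM : p ≤ M) {n : ℤ}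
    (hn : 0 < uSeq N p (2 * n) ^ 2 + vSeq N p (2 * n) ^ 2) :
    conj (betaS N p n) = betaS N p n := by
  have hΥ : 0 < upsilon N p n := div_pos hn (by norm_num)
  rw [betaS, map_div₀, conj_cpow_one_half_of_pos hΥ, bhat1_eq_half_add hNM hp hpM, map_div₀,
    map_add, conj_uSeq hNM hp hpM, conj_vSeq_two_mul hNM hp hpM, map_ofNat]

theorem betaS_sq_add_betaS_add_half_sq {N M p : ℕ} (hNM : N = 2 * M) (hp : 2 ≤ p) (hpM : p ≤ M)
    {n : ℤ} (hn : uSeq N p (2 * n) ^ 2 + vSeq N p (2 * n) ^ 2 ≠ 0) :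
    betaS N p n ^ 2 + betaS N p (n + M) ^ 2 = 2 := by
  rw [betaS, betaS, upsilon_add_half hNM (by omega), div_pow, div_pow, cpow_one_half_sq,
    ← add_div, bhat1_add_half hNM hp hpM, bhat1_eq_half_add hNM hp hpM, upsilon,
    div_eq_iff (div_ne_zero hn (by norm_num))]
  ring

theorem betaS_add_half_add_half {N M p : ℕ} (hNM : N = 2 * M) (hp : 2 ≤ p) (hpM : p ≤ M) (n : ℤ) :
    betaS N p (n + M + M) = betaS N p n := by
  have hM : M ≠ 0 := by omega
  rw [betaS, betaS, upsilon_add_half hNM hM, upsilon_add_half hNM hM, bhat1_add_half hNM hp hpM,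
    uSeq_two_mul_add_half hNM, vSeq_two_mul_add_half hNM hM, sub_neg_eq_add,
    bhat1_eq_half_add hNM hp hpM]

noncomputable def psi1Hat (N p lam : ℕ) (n : ℤ) : ℂ :=
  if lam = 0 then betaS N p n else alphaS N p n

theorem psi1_eq_idft (N p lam : ℕ) : psi1 N p lam = idft N (psi1Hat N p lam) := rfl

theorem psi1Hat_pairing {N M p : ℕ} (hNM : N = 2 * M) (hp : 2 ≤ p) (hpM : p ≤ M)
    (hpos : ∀ n : ℤ, 0 < uSeq N p (2 * n) ^ 2 + vSeq N p (2 * n) ^ 2)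
    {lam mu : ℕ} (hlam : lam < 2) (hmu : mu < 2) (n : ℤ) :
    psi1Hat N p lam n * conj (psi1Hat N p mu n)
        + psi1Hat N p lam (n + M) * conj (psi1Hat N p mu (n + M))
      = 2 * if lam = mu then 1 else 0 := by
  have halpha : ∀ t : ℤ, alphaS N p t = ww N ^ t * betaS N p (t + M) := fun t => by
    rw [alphaS, show (N : ℤ) / 2 = M by omega]
  have hw : ww N ^ (n + M) = -ww N ^ n := by
    rw [zpow_add₀ (ww_ne_zero N), ww_zpow_half hNM (by omega), mul_neg_one]
  have hunit : ww N ^ n * conj (ww N ^ n) = 1 := by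
    rw [conj_ww_zpow, ← zpow_add₀ (ww_ne_zero N), add_neg_cancel, zpow_zero]
  have hconj := fun t => conj_betaS hNM hp hpM (hpos t)
  have hsq := betaS_sq_add_betaS_add_half_sq hNM hp hpM (hpos n).ne'
  have hper := betaS_add_half_add_half hNM hp hpM n
  interval_cases lam <;> interval_cases mu <;>
    simp only [psi1Hat, if_true, if_false, one_ne_zero, zero_ne_one, halpha, hw, hper, map_mul,
      map_neg, hconj]
  · linear_combination hsq
  · ring
  · ring
  · linear_combination (betaS N p n ^ 2 + betaS N p (n + M) ^ 2) * hunit + hsq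

theorem psi1_shifts_orthonormal_basis_general (N p : ℕ) (hNe : Even N)
    (hp : 2 ≤ p) (hpN : p ≤ N / 2)
    (hpos : ∀ n : ℤ, 0 < uSeq N p (2 * n) ^ 2 + vSeq N p (2 * n) ^ 2) :
    ∀ lam mu : ℕ, lam < 2 → mu < 2 → ∀ l m : ℕ, l < N / 2 → m < N / 2 →
      inner1 N (fun k => psi1 N p lam (k - 2 * (l : ℤ)))
          (fun k => psi1 N p mu (k - 2 * (m : ℤ)))
        = if lam = mu ∧ l = m then 1 else 0 := by
  intro lam mu hlam hmu l m hl hm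
  obtain ⟨M, hNM⟩ : ∃ M, N = 2 * M := ⟨N / 2, by have := Nat.even_iff.mp hNe; omega⟩
  rw [hNM, Nat.mul_div_cancel_left M two_pos] at hpN hl hm
  simp only [psi1_eq_idft]
  rw [inner1_idft_shift_two_mul hNM (by omega) (psi1Hat_pairing hNM hp hpN hpos hlam hmu) hl hm]
  by_cases hlm : l = m <;> simp [hlm]

/-- The 2-sample shifts of the first-level wavelet packets ψ_{[1],0}^p and
    ψ_{[1],1}^p form an orthonormal basis of Π[N]. -/
theorem psi1_shifts_orthonormal_basis (N p : ℕ) (hN : 0 < N) (hNe : Even N)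
    (hp : 2 ≤ p) (hpN : p ≤ N / 2)
    (hpos : ∀ n : ℤ, 0 < uSeq N p (2 * n) ^ 2 + vSeq N p (2 * n) ^ 2) :
    ∀ lam mu : ℕ, lam < 2 → mu < 2 → ∀ l m : ℕ, l < N / 2 → m < N / 2 →
      inner1 N (fun k => psi1 N p lam (k - 2 * (l : ℤ)))
          (fun k => psi1 N p mu (k - 2 * (m : ℤ)))
        = if lam = mu ∧ l = m then 1 else 0 :=
  psi1_shifts_orthonormal_basis_general N p hNe hp hpN hpos

end WP
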